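/- Every nonempty rational half-open cone C₀ ⊆ ℝⁿ contains a lattice point, i.e. C₀ ≠ ∅ implies C₀ ∩ ℤⁿ ≠ ∅. -/

import Mathlib

noncomputable section

/-- Standard inner product of an integer vector with a real vector. -/
def ipR {n : ℕ} (α : Fin n → ℤ) (ω : Fin n → ℝ) : ℝ := ∑ i, (α i : ℝ) * ω i

/-- Cast of an integer lattice vector to ℝⁿ. -/
def castR {n : ℕ} (β : Fin n → ℤ) : Fin n → ℝ := fun i => (β i : ℝ)

/-- A rational half-open cone in ℝⁿ. -/
def IsRatHalfOpenCone {n : ℕ} (C : Set (Fin n → ℝ)) : Prop :=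
  ∃ (d e : ℕ) (φ : Fin d → (Fin n → ℤ)) (χ : Fin e → (Fin n → ℤ)),
    C = {ω | (∀ i, 0 ≤ ipR (φ i) ω) ∧ (∀ j, 0 < ipR (χ j) ω)}

/-
Take `ω` in the cone and let `E` be the set of `φᵢ` vanishing at `ω`. Near `ω`, every point of
the subspace `{x | ⟨φᵢ, x⟩ = 0 for i ∈ E}` still satisfies all the cone inequalities, the
non-tight ones being open conditions. This subspace is cut out by rational equations, so its
rational points are dense in it: if `G` is a generalized inverse of the coefficient matrix `A`
over `ℚ`, then `y ↦ y - G A y` fixes the real kernel of `A` and maps `ℚⁿ` into it. Hence the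
cone contains a rational point, and clearing denominators gives a lattice point.
-/

open Matrix Filter Topology

theorem LinearMap.exists_comp_comp_eq_self {K V W : Type*} [DivisionRing K] [AddCommGroup V]
    [Module K V] [AddCommGroup W] [Module K W] (f : V →ₗ[K] W) :
    ∃ g : W →ₗ[K] V, f ∘ₗ g ∘ₗ f = f := by
  obtain ⟨s, hs⟩ := f.rangeRestrict.exists_rightInverse_of_surjective f.range_rangeRestrict
  obtain ⟨r, hr⟩ := f.range.subtype.exists_leftInverse_of_injective f.range.ker_subtype
  refine ⟨s ∘ₗ r, LinearMap.ext fun v => ?_⟩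
  have hr' : r (f v) = f.rangeRestrict v := LinearMap.congr_fun hr (f.rangeRestrict v)
  simp only [LinearMap.comp_apply, hr']
  exact congrArg Subtype.val (LinearMap.congr_fun hs (f.rangeRestrict v))

theorem Matrix.exists_mul_mul_eq_self {K m n : Type*} [Field K] [Fintype m] [Fintype n]
    (A : Matrix m n K) : ∃ G : Matrix n m K, A * G * A = A := by
  classical
  obtain ⟨g, hg⟩ := (toLin' A).exists_comp_comp_eq_self
  refine ⟨LinearMap.toMatrix' g, toLin'.injective ?_⟩
  rw [toLin'_mul, toLin'_mul, toLin'_toMatrix', LinearMap.comp_assoc, hg]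

theorem Matrix.ratCast_comp_mulVec {K m n : Type*} [DivisionRing K] [CharZero K] [Fintype n]
    (M : Matrix m n ℚ) (v : n → ℚ) :
    Rat.cast ∘ (M *ᵥ v) = M.map (↑) *ᵥ (Rat.cast ∘ v : n → K) :=
  funext (RingHom.map_mulVec (Rat.castHom K) M v)

theorem Matrix.mem_closure_ratCast_ker {m n : Type*} [Fintype m] [Fintype n] (A : Matrix m n ℚ)
    {x : n → ℝ} (hx : A.map (↑) *ᵥ x = 0) :
    x ∈ closure ((Rat.cast ∘ ·) '' {q : n → ℚ | A *ᵥ q = 0}) := by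
  obtain ⟨G, hG⟩ := A.exists_mul_mul_eq_self
  let proj : (n → ℝ) → n → ℝ := fun y => y - G.map (↑) *ᵥ (A.map (↑) *ᵥ y)
  have hproj : proj x = x := by simp only [proj, hx, mulVec_zero, sub_zero]
  have hdense : DenseRange (Rat.cast ∘ · : (n → ℚ) → n → ℝ) :=
    DenseRange.piMap fun _ => Rat.denseRange_cast
  rw [← hproj]
  refine map_mem_closure (by fun_prop) (hdense.closure_range ▸ Set.mem_univ x) ?_
  rintro _ ⟨q, rfl⟩
  refine ⟨q - G *ᵥ (A *ᵥ q), ?_, ?_⟩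
  · rw [Set.mem_ofPred_eq, mulVec_sub, mulVec_mulVec, mulVec_mulVec, hG, sub_self]
  · simp only [proj, ← ratCast_comp_mulVec]
    exact funext fun i => Rat.cast_sub _ _

theorem exists_pos_natCast_mul_eq_intCast {ι : Type*} [Fintype ι] (q : ι → ℚ) :
    ∃ N : ℕ, 0 < N ∧ ∃ β : ι → ℤ, ∀ i, (β i : ℚ) = N * q i := by
  have hmul (i : ι) : ∃ b : ℤ, (b : ℚ) = (∏ i, (q i).den : ℕ) * q i := by
    obtain ⟨k, hk⟩ := Finset.dvd_prod_of_mem (fun i => (q i).den) (Finset.mem_univ i)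
    refine ⟨(q i).num * k, ?_⟩
    rw [hk, Nat.cast_mul, mul_right_comm, Rat.den_mul_eq_num]
    push_cast
    ring
  choose β hβ using hmul
  exact ⟨_, Finset.prod_pos fun i _ => (q i).pos, β, hβ⟩

section HalfOpenCone

variable {n : ℕ} {ι κ : Type*}

theorem ipR_smul (α : Fin n → ℤ) (c : ℝ) (ω : Fin n → ℝ) : ipR α (c • ω) = c * ipR α ω := by
  simp only [ipR, Pi.smul_apply, smul_eq_mul, Finset.mul_sum, mul_left_comm]

theorem continuous_ipR (α : Fin n → ℤ) : Continuous (ipR α) := by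
  unfold ipR
  fun_prop

def halfOpenCone (φ : ι → Fin n → ℤ) (χ : κ → Fin n → ℤ) : Set (Fin n → ℝ) :=
  {ω | (∀ i, 0 ≤ ipR (φ i) ω) ∧ (∀ j, 0 < ipR (χ j) ω)}

theorem smul_mem_halfOpenCone {φ : ι → Fin n → ℤ} {χ : κ → Fin n → ℤ} {c : ℝ} (hc : 0 < c)
    {ω : Fin n → ℝ} (hω : ω ∈ halfOpenCone φ χ) : c • ω ∈ halfOpenCone φ χ := by
  refine ⟨fun i => ?_, fun j => ?_⟩ <;> rw [ipR_smul]
  · exact mul_nonneg hc.le (hω.1 i)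
  · exact mul_pos hc (hω.2 j)

theorem exists_ratCast_mem_halfOpenCone [Finite ι] [Finite κ] (φ : ι → Fin n → ℤ)
    (χ : κ → Fin n → ℤ) (hne : (halfOpenCone φ χ).Nonempty) :
    ∃ q : Fin n → ℚ, Rat.cast ∘ q ∈ halfOpenCone φ χ := by
  classical
  have := Fintype.ofFinite ι
  obtain ⟨ω, hφ, hχ⟩ := hne
  let A : Matrix {i // ipR (φ i) ω = 0} (Fin n) ℚ := Matrix.of fun i j => φ i.1 j
  have hA (x : Fin n → ℝ) : A.map (↑) *ᵥ x = fun i => ipR (φ i.1) x := by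
    ext i
    simp only [mulVec, dotProduct, ipR]
    exact Finset.sum_congr rfl fun j _ => congrArg (· * x j) (Rat.cast_intCast (φ i j))
  have hω : ω ∈ closure ((Rat.cast ∘ ·) '' {q | A *ᵥ q = 0}) :=
    A.mem_closure_ratCast_ker (by rw [hA]; exact funext fun i => i.2)
  have eventually_pos (α : Fin n → ℤ) (h : 0 < ipR α ω) : ∀ᶠ y in 𝓝 ω, 0 < ipR α y :=
    continuousAt_const.eventually_lt (continuous_ipR α).continuousAt h
  have hnear : ∀ᶠ y in 𝓝 ω,
      (∀ i : {i // 0 < ipR (φ i) ω}, 0 < ipR (φ i) y) ∧ ∀ j, 0 < ipR (χ j) y :=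
    (eventually_all.2 fun i => eventually_pos _ i.2).and
      (eventually_all.2 fun j => eventually_pos _ (hχ j))
  obtain ⟨_, ⟨q, hAq, rfl⟩, hpos, hχq⟩ :=
    ((mem_closure_iff_frequently.1 hω).and_eventually hnear).exists
  refine ⟨q, fun i => ?_, hχq⟩
  rcases (hφ i).eq_or_lt with htight | hslack
  · have h := congrFun (hA (Rat.cast ∘ q)) ⟨i, htight.symm⟩
    rw [← ratCast_comp_mulVec, hAq] at h
    exact (h.symm.trans Rat.cast_zero).ge
  · exact (hpos ⟨i, hslack⟩).le

end HalfOpenCone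

/-- Every nonempty rational half-open cone contains a lattice point. -/
theorem ratHalfOpenCone_nonempty_lattice_point {n : ℕ}
    (C : Set (Fin n → ℝ)) (hC : IsRatHalfOpenCone C) (hne : C.Nonempty) :
    ∃ β : Fin n → ℤ, castR β ∈ C := by
  obtain ⟨d, e, φ, χ, rfl⟩ := hC
  obtain ⟨q, hq⟩ := exists_ratCast_mem_halfOpenCone φ χ hne
  obtain ⟨N, hN, β, hβ⟩ := exists_pos_natCast_mul_eq_intCast q
  have hcast : castR β = (N : ℝ) • (Rat.cast ∘ q) :=
    funext fun i => by simpa [castR] using congrArg (Rat.cast : ℚ → ℝ) (hβ i)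
  exact ⟨β, hcast ▸ smul_mem_halfOpenCone (Nat.cast_pos.2 hN) hq⟩
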